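/- (Relative error of the state-dependent gradient) Suppose f_{x̄} is α-strongly convex for some α > 0 and x̄ minimizes f_{x̄} over E (so ∇f_{x̄}(x̄) = 0). Then for every x ∈ E, ‖∇f_x(x) − ∇f_{x̄}(x)‖ ≤ (γβ/α)·‖∇f_{x̄}(x)‖. -/

import Mathlib

/-! Strong convexity of `f xbar` makes its gradient strongly monotone, and the gradient vanishes
at the minimizer `xbar`, so `α ‖x - xbar‖ ≤ ‖Gf xbar x‖`. On the other hand, `Gf x x - Gf xbar x`
is the difference of the integrals of the `β`-Lipschitz map `G x` against `D x` and `D xbar`;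
pairing it with its own direction `v` gives a scalar `β ‖v‖`-Lipschitz test function, so the
Kantorovich–Rubinstein bound yields `‖Gf x x - Gf xbar x‖ ≤ γ β ‖x - xbar‖`. -/

open MeasureTheory Set
open scoped NNReal RealInnerProductSpace Topology

theorem ConvexOn.hasFDerivAt_apply_sub_le {F : Type*} [NormedAddCommGroup F] [NormedSpace ℝ F]
    {f : F → ℝ} (hf : ConvexOn ℝ univ f) {x y : F} {f'x f'y : F →L[ℝ] ℝ}
    (hx : HasFDerivAt f f'x x) (hy : HasFDerivAt f f'y y) :
    f'y (x - y) ≤ f'x (x - y) := by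
  have hline : ConvexOn ℝ univ (f ∘ AffineMap.lineMap (k := ℝ) y x) := by
    simpa using hf.comp_affineMap (AffineMap.lineMap (k := ℝ) y x)
  have hderiv {t : ℝ} {f' : F →L[ℝ] ℝ} (h : HasFDerivAt f f' (AffineMap.lineMap y x t)) :
      HasDerivAt (f ∘ AffineMap.lineMap (k := ℝ) y x) (f' (x - y)) t :=
    h.comp_hasDerivAt t AffineMap.hasDerivAt_lineMap
  exact (hline.le_slope_of_hasDerivAt (mem_univ 0) (mem_univ 1) zero_lt_one
    (hderiv (by simpa using hy))).trans
    (hline.slope_le_of_hasDerivAt (mem_univ 0) (mem_univ 1) zero_lt_one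
      (hderiv (by simpa using hx)))

section InnerProductSpace

variable {E : Type*} [NormedAddCommGroup E] [InnerProductSpace ℝ E] [CompleteSpace E]
  {f : E → ℝ} {x y g : E}

theorem IsLocalMin.hasGradientAt_eq_zero (h : IsLocalMin f x) (hf : HasGradientAt f g x) :
    g = 0 :=
  (InnerProductSpace.toDual ℝ E).map_eq_zero_iff.mp
    (h.hasFDerivAt_eq_zero (hasGradientAt_iff_hasFDerivAt.mp hf))

theorem ConvexOn.mul_sq_norm_sub_le_inner_gradient_sub {α : ℝ}
    (hf : ConvexOn ℝ univ fun y => f y - α / 2 * ‖y‖ ^ 2) {f'x f'y : E}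
    (hx : HasGradientAt f f'x x) (hy : HasGradientAt f f'y y) :
    α * ‖x - y‖ ^ 2 ≤ ⟪f'x - f'y, x - y⟫ := by
  have hderiv {z f'z : E} (h : HasGradientAt f f'z z) :=
    (hasGradientAt_iff_hasFDerivAt.mp h).sub
      ((hasStrictFDerivAt_norm_sq z).hasFDerivAt.const_mul (α / 2))
  have key := hf.hasFDerivAt_apply_sub_le (hderiv hx) (hderiv hy)
  simp only [sub_apply, smul_apply, InnerProductSpace.toDual_apply_apply, innerSL_apply_apply,
    smul_eq_mul, nsmul_eq_mul] at key
  rw [← real_inner_self_eq_norm_sq, inner_sub_left, inner_sub_left]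
  linarith

theorem ConvexOn.mul_norm_sub_le_norm_gradient_sub {α : ℝ}
    (hf : ConvexOn ℝ univ fun y => f y - α / 2 * ‖y‖ ^ 2) {f'x f'y : E}
    (hx : HasGradientAt f f'x x) (hy : HasGradientAt f f'y y) :
    α * ‖x - y‖ ≤ ‖f'x - f'y‖ := by
  rcases (norm_nonneg (x - y)).eq_or_lt with h | h
  · simp [← h]
  · refine le_of_mul_le_mul_right ?_ h
    calc α * ‖x - y‖ * ‖x - y‖ = α * ‖x - y‖ ^ 2 := by ring
      _ ≤ ⟪f'x - f'y, x - y⟫ := hf.mul_sq_norm_sub_le_inner_gradient_sub hx hy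
      _ ≤ ‖f'x - f'y‖ * ‖x - y‖ := real_inner_le_norm _ _

end InnerProductSpace

section Transport

variable {Z : Type*} [PseudoEMetricSpace Z] [MeasurableSpace Z] {μ ν : Measure Z} {C : ℝ}

theorem abs_integral_sub_integral_le_of_lipschitzWith
    (hKR : ∀ g : Z → ℝ, LipschitzWith 1 g → |∫ z, g z ∂μ - ∫ z, g z ∂ν| ≤ C)
    {K : ℝ≥0} {g : Z → ℝ} (hg : LipschitzWith K g) :
    |∫ z, g z ∂μ - ∫ z, g z ∂ν| ≤ K * C := by
  have hscaled (c : ℝ≥0) (hKc : K < c) : |∫ z, g z ∂μ - ∫ z, g z ∂ν| ≤ c * C := by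
    have hc : (0 : ℝ) < c := NNReal.coe_pos.mpr (pos_of_gt hKc)
    have hg' : LipschitzWith 1 fun z => (c : ℝ)⁻¹ * g z := by
      have := (lipschitzWith_smul (c : ℝ)⁻¹).comp (hg.weaken hKc.le)
      rwa [show ‖(c : ℝ)⁻¹‖₊ * c = 1 by simp [(pos_of_gt hKc).ne']] at this
    have := hKR _ hg'
    rwa [integral_const_mul, integral_const_mul, ← mul_sub, abs_mul, abs_inv, abs_of_pos hc,
      inv_mul_le_iff₀ hc] at this
  -- `K` may vanish, so rescale by every `c > K` and let `c` decrease to `K`.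
  have hlim : Filter.Tendsto (fun c : ℝ≥0 => (c : ℝ) * C) (𝓝[>] K) (𝓝 (K * C)) :=
    ((NNReal.continuous_coe.mul continuous_const).tendsto K).mono_left nhdsWithin_le_nhds
  exact ge_of_tendsto hlim (eventually_nhdsWithin_of_forall hscaled)

theorem norm_integral_sub_integral_le_of_lipschitzWith
    {E : Type*} [NormedAddCommGroup E] [InnerProductSpace ℝ E] [CompleteSpace E]
    (hKR : ∀ g : Z → ℝ, LipschitzWith 1 g → |∫ z, g z ∂μ - ∫ z, g z ∂ν| ≤ C)
    {K : ℝ≥0} {F : Z → E} (hF : LipschitzWith K F) (hμ : Integrable F μ)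
    (hν : Integrable F ν) :
    ‖∫ z, F z ∂μ - ∫ z, F z ∂ν‖ ≤ K * C := by
  set v := ∫ z, F z ∂μ - ∫ z, F z ∂ν
  have hC : 0 ≤ C := by simpa using hKR (fun _ => 0) (LipschitzWith.const' 0)
  have hinner : LipschitzWith (‖v‖₊ * K) fun z => ⟪v, F z⟫ := by
    have := (innerSL ℝ v).lipschitz.comp hF
    rwa [show ‖innerSL ℝ v‖₊ = ‖v‖₊ from NNReal.eq (innerSL_apply_norm ℝ v)] at this
  have hsq : ‖v‖ ^ 2 ≤ ‖v‖ * (K * C) := by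
    calc ‖v‖ ^ 2 = ∫ z, ⟪v, F z⟫ ∂μ - ∫ z, ⟪v, F z⟫ ∂ν := by
          rw [integral_inner hμ, integral_inner hν, ← inner_sub_right,
            real_inner_self_eq_norm_sq]
      _ ≤ |∫ z, ⟪v, F z⟫ ∂μ - ∫ z, ⟪v, F z⟫ ∂ν| := le_abs_self _
      _ ≤ ‖v‖ * K * C := by
          simpa using abs_integral_sub_integral_le_of_lipschitzWith hKR hinner
      _ = ‖v‖ * (K * C) := mul_assoc _ _ _
  nlinarith [norm_nonneg v, mul_nonneg K.coe_nonneg hC]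

end Transport

theorem repeated_minimization_contraction_general
    {E : Type*} [NormedAddCommGroup E] [InnerProductSpace ℝ E] [FiniteDimensional ℝ E]
    {Z : Type*} [MetricSpace Z] [MeasurableSpace Z]
    (G : E → Z → E) (β γ : ℝ) (hβ : 0 ≤ β) (hγ : 0 ≤ γ)
    (hlip : ∀ (x : E) (z z' : Z), ‖G x z - G x z'‖ ≤ β * dist z z')
    (D : E → Measure Z)
    (hintG : ∀ x y : E, Integrable (fun z => G y z) (D x))
    (f : E → E → ℝ) (Gf : E → E → E)
    (hGfdef : ∀ x y : E, Gf x y = ∫ z, G y z ∂(D x))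
    (hfgrad : ∀ x y : E, HasGradientAt (f x) (Gf x y) y)
    (hDlip : ∀ x y : E, ∀ g : Z → ℝ, LipschitzWith 1 g →
      |(∫ z, g z ∂(D x)) - ∫ z, g z ∂(D y)| ≤ γ * ‖x - y‖)
    (xbar : E) (hxbar : ∀ y : E, f xbar xbar ≤ f xbar y)
    (α : ℝ) (hα : 0 < α)
    (hsc : ConvexOn ℝ univ (fun y => f xbar y - α / 2 * ‖y‖ ^ 2))
    (x : E) :
    ‖Gf x x - Gf xbar x‖ ≤ (γ * β / α) * ‖Gf xbar x‖ := by
  have hcrit : Gf xbar xbar = 0 :=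
    IsLocalMin.hasGradientAt_eq_zero (.of_forall hxbar) (hfgrad xbar xbar)
  have hgrowth : α * ‖x - xbar‖ ≤ ‖Gf xbar x‖ := by
    simpa [hcrit] using hsc.mul_norm_sub_le_norm_gradient_sub (hfgrad xbar x) (hfgrad xbar xbar)
  have hGlip : LipschitzWith β.toNNReal (G x) := .of_dist_le_mul fun z z' => by
    simpa [dist_eq_norm, Real.coe_toNNReal _ hβ] using hlip x z z'
  have hdrift : ‖Gf x x - Gf xbar x‖ ≤ β * (γ * ‖x - xbar‖) := by
    simpa [hGfdef, Real.coe_toNNReal _ hβ] using norm_integral_sub_integral_le_of_lipschitzWith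
      (hDlip x xbar) hGlip (hintG x x) (hintG xbar x)
  calc ‖Gf x x - Gf xbar x‖ ≤ β * (γ * ‖x - xbar‖) := hdrift
    _ = γ * β / α * (α * ‖x - xbar‖) := by field_simp
    _ ≤ γ * β / α * ‖Gf xbar x‖ := by gcongr

/-- **Contraction of repeated minimization toward equilibrium.** If `f_{xbar}` is `α`-strongly
convex, then any minimizer `xp` of `f_x + r` satisfies `‖xp − xbar‖ ≤ (γβ/α)‖x − xbar‖`. -/
theorem repeated_minimization_contraction
    {E : Type*} [NormedAddCommGroup E] [InnerProductSpace ℝ E] [FiniteDimensional ℝ E]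
    {Z : Type*} [MetricSpace Z] [MeasurableSpace Z] [BorelSpace Z]
    (ℓ : E → Z → ℝ) (G : E → Z → E) (β γ : ℝ) (hβ : 0 ≤ β) (hγ : 0 ≤ γ)
    (hgrad : ∀ (x : E) (z : Z), HasGradientAt (fun x' => ℓ x' z) (G x z) x)
    (hlip : ∀ (x : E) (z z' : Z), ‖G x z - G x z'‖ ≤ β * dist z z')
    (D : E → Measure Z) (hD : ∀ x : E, IsProbabilityMeasure (D x))
    (hint : ∀ x y : E, Integrable (fun z => ℓ y z) (D x))
    (hintG : ∀ x y : E, Integrable (fun z => G y z) (D x))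
    (f : E → E → ℝ) (Gf : E → E → E)
    (hfdef : ∀ x y : E, f x y = ∫ z, ℓ y z ∂(D x))
    (hGfdef : ∀ x y : E, Gf x y = ∫ z, G y z ∂(D x))
    (hfgrad : ∀ x y : E, HasGradientAt (f x) (Gf x y) y)
    (hDlip : ∀ x y : E, ∀ g : Z → ℝ, LipschitzWith 1 g →
      |(∫ z, g z ∂(D x)) - ∫ z, g z ∂(D y)| ≤ γ * ‖x - y‖)
    (xbar : E) (hxbar : ∀ y : E, f xbar xbar ≤ f xbar y)
    (α : ℝ) (hα : 0 < α)
    (hsc : ConvexOn ℝ univ (fun y => f xbar y - α / 2 * ‖y‖ ^ 2))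
    (x : E) :
    ‖Gf x x - Gf xbar x‖ ≤ (γ * β / α) * ‖Gf xbar x‖ :=
  repeated_minimization_contraction_general G β γ hβ hγ hlip D hintG f Gf hGfdef hfgrad hDlip xbar
    hxbar α hα hsc x
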